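/- Let d > 1 with 9 ∤ d and write d = 3^α·δ with gcd(δ,3)=1. Then the period ρ(d) = 2·ord_9(4δ) of the Salajan sequence modulo d is even, and ρ(2^e) = 2^e for every e ≥ 1, ρ(3) = 2, and ρ(p^e) divides φ(p^e) for every odd prime p. -/

import Mathlib

/-- The Salajan sequence: `u j = (3^j - 5*(-1)^j)/4`. -/
def salajanU (j : ℕ) : ℤ := ((3 : ℤ) ^ j - 5 * (-1) ^ j) / 4

/-- The (eventual) minimal period of the Salajan sequence modulo `d`. -/
noncomputable def salajanRho (d : ℕ) : ℕ :=
  sInf {k : ℕ | 0 < k ∧ ∃ n0 : ℕ,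
    ∀ n : ℕ, n0 ≤ n → salajanU n ≡ salajanU (n + k) [ZMOD (d : ℤ)]}

/-!
Since `4 u n = 3 ^ n - 5 (-1) ^ n`, we have
`4 (u (n + k) - u n) = 3 ^ n (3 ^ k - 1) - 5 (-1) ^ n ((-1) ^ k - 1)`.
For `k = 2 m` the second term vanishes, and once `n ≥ α` the factor `3 ^ n` absorbs `3 ^ α`, so
`2 m` is an eventual period modulo `d = 3 ^ α δ` iff `9 ^ m ≡ 1 [ZMOD 4 δ]`. An odd `k` is never an
eventual period modulo `d > 1`: two consecutive differences force `d ∣ 10`, while `u n ≡ n + 1`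
modulo `2` and `4 u n ≡ 3 ^ n` modulo `5`, where `3` has order `4`. So the eventual periods are exactly the multiples of
`2 ord_{4δ}(9)`. Then `9 = 1 + 2 ^ 3` has order `2 ^ (e - 1)` modulo `2 ^ (e + 2)`, and for odd `d`
Euler's theorem makes `φ d` an eventual period.
-/

open Nat

lemma four_dvd_three_pow_sub_five_mul (j : ℕ) : (4 : ℤ) ∣ 3 ^ j - 5 * (-1) ^ j := by
  have h := sub_dvd_pow_sub_pow (3 : ℤ) (-1) j
  norm_num at h
  have e : (3 : ℤ) ^ j - 5 * (-1) ^ j = 3 ^ j - (-1) ^ j - 4 * (-1) ^ j := by ring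
  exact e ▸ dvd_sub h (dvd_mul_right 4 _)

lemma four_mul_salajanU (j : ℕ) : 4 * salajanU j = 3 ^ j - 5 * (-1) ^ j :=
  Int.mul_ediv_cancel' (four_dvd_three_pow_sub_five_mul j)

lemma four_mul_salajanU_add_sub (n k : ℕ) :
    4 * (salajanU (n + k) - salajanU n) =
      3 ^ n * (3 ^ k - 1) - 5 * (-1) ^ n * ((-1) ^ k - 1) := by
  rw [mul_sub, four_mul_salajanU, four_mul_salajanU]
  ring

lemma four_mul_salajanU_add_two_mul_sub (n m : ℕ) :
    4 * (salajanU (n + 2 * m) - salajanU n) = 3 ^ n * (9 ^ m - 1) := by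
  rw [four_mul_salajanU_add_sub, pow_mul, pow_mul]
  norm_num

lemma salajanU_add_two (n : ℕ) :
    salajanU (n + 2) = 2 * salajanU (n + 1) + 3 * salajanU n := by
  have h0 := four_mul_salajanU n
  have h1 := four_mul_salajanU (n + 1)
  have h2 := four_mul_salajanU (n + 2)
  apply mul_left_cancel₀ (four_ne_zero' ℤ)
  linear_combination h2 - 2 * h1 - 3 * h0

lemma salajanU_cast_zmod_two (n : ℕ) : (salajanU n : ZMod 2) = n + 1 := by
  induction n using Nat.twoStepInduction with
  | zero => decide
  | one => decide
  | more n ih _ =>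
    have h2 : (2 : ZMod 2) = 0 := rfl
    push_cast [salajanU_add_two, ih]
    linear_combination (salajanU (n + 1) + n) * h2

def IsSalajanPeriod (d k : ℕ) : Prop :=
  ∃ n0 : ℕ, ∀ n : ℕ, n0 ≤ n → salajanU n ≡ salajanU (n + k) [ZMOD (d : ℤ)]

lemma salajanRho_eq_sInf (d : ℕ) : salajanRho d = sInf {k | 0 < k ∧ IsSalajanPeriod d k} := rfl

lemma IsSalajanPeriod.of_dvd {d d' k : ℕ} (h : d' ∣ d) (hk : IsSalajanPeriod d k) :
    IsSalajanPeriod d' k := by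
  obtain ⟨n0, hn0⟩ := hk
  exact ⟨n0, fun n hn => (hn0 n hn).of_dvd (Int.natCast_dvd_natCast.mpr h)⟩

lemma IsSalajanPeriod.even_of_two {k : ℕ} (hk : IsSalajanPeriod 2 k) : Even k := by
  obtain ⟨n0, hn0⟩ := hk
  have h := (ZMod.intCast_eq_intCast_iff _ _ 2).mpr (hn0 n0 le_rfl)
  rw [salajanU_cast_zmod_two, salajanU_cast_zmod_two] at h
  rw [← ZMod.natCast_eq_zero_iff_even]
  push_cast at h
  linear_combination -h

lemma orderOf_three_zmod_five : orderOf (3 : ZMod 5) = 4 :=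
  (orderOf_eq_iff four_pos).mpr (by decide)

lemma IsSalajanPeriod.four_dvd_of_five {k : ℕ} (hk : IsSalajanPeriod 5 k) : 4 ∣ k := by
  obtain ⟨n0, hn0⟩ := hk
  have h := congrArg (Int.cast : ℤ → ZMod 5) (four_mul_salajanU_add_sub n0 k)
  push_cast at h
  rw [(ZMod.intCast_eq_intCast_iff _ _ 5).mpr (hn0 n0 le_rfl), sub_self] at h
  have h5 : (5 : ZMod 5) = 0 := rfl
  have h3 : IsUnit ((3 : ZMod 5) ^ n0) :=
    (IsUnit.of_mul_eq_one (a := (3 : ZMod 5)) 2 (by decide)).pow n0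
  rw [h5, zero_mul, zero_mul, sub_zero, mul_zero, eq_comm, h3.mul_right_eq_zero, sub_eq_zero] at h
  exact orderOf_three_zmod_five ▸ orderOf_dvd_of_pow_eq_one h

lemma IsSalajanPeriod.dvd_ten_of_odd {d k : ℕ} (hk : Odd k) (h : IsSalajanPeriod d k) :
    d ∣ 10 := by
  obtain ⟨n0, hn0⟩ := h
  have ha := four_mul_salajanU_add_sub n0 k
  have hb := four_mul_salajanU_add_sub (n0 + 1) k
  have hsign : (-1 : ℤ) ^ k = -1 := hk.neg_one_pow
  -- eliminating `3 ^ n0 * (3 ^ k - 1)` between two consecutive differences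
  have key : 3 * (salajanU (n0 + k) - salajanU n0) - (salajanU (n0 + 1 + k) - salajanU (n0 + 1))
      = 10 * (-1) ^ n0 := by
    apply mul_left_cancel₀ (four_ne_zero' ℤ)
    linear_combination 3 * ha - hb - 20 * (-1 : ℤ) ^ n0 * hsign
  have hdvd : (d : ℤ) ∣ 10 * (-1) ^ n0 := key ▸ dvd_sub
    (dvd_mul_of_dvd_right (hn0 n0 le_rfl).dvd 3) (hn0 (n0 + 1) (by omega)).dvd
  simpa [Int.natAbs_mul, Int.natAbs_pow] using Int.natCast_dvd.mp hdvd

lemma not_isSalajanPeriod_of_odd {d k : ℕ} (hd : 1 < d) (hk : Odd k) :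
    ¬ IsSalajanPeriod d k := by
  intro h
  obtain ⟨p, hp, hpd⟩ := Nat.exists_prime_and_dvd hd.ne'
  rcases (Nat.Prime.dvd_mul hp).mp (hpd.trans (h.dvd_ten_of_odd hk) : p ∣ 2 * 5) with h2 | h5
  · have h2d : 2 ∣ d := (Nat.prime_dvd_prime_iff_eq hp Nat.prime_two).mp h2 ▸ hpd
    exact Nat.not_even_iff_odd.mpr hk (h.of_dvd h2d).even_of_two
  · have h5d : 5 ∣ d := (Nat.prime_dvd_prime_iff_eq hp (by norm_num)).mp h5 ▸ hpd
    have h4k := (h.of_dvd h5d).four_dvd_of_five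
    exact Nat.not_even_iff_odd.mpr hk (even_iff_two_dvd.mpr (dvd_trans (by norm_num) h4k))

lemma isSalajanPeriod_two_mul_iff {α δ : ℕ} (hδ : ¬ 3 ∣ δ) (m : ℕ) :
    IsSalajanPeriod (3 ^ α * δ) (2 * m) ↔ 9 ^ m ≡ 1 [ZMOD 4 * δ] := by
  have hcop (n : ℕ) : IsCoprime (4 * δ : ℤ) (3 ^ n) := by
    have : Nat.Coprime (4 * δ) 3 :=
      ((Nat.Prime.coprime_iff_not_dvd Nat.prime_three).mpr (by omega)).symm
    exact_mod_cast (Nat.isCoprime_iff_coprime.mpr this).pow_right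
  have hmod (n : ℕ) : salajanU n ≡ salajanU (n + 2 * m) [ZMOD (3 ^ α * δ : ℕ)] ↔
      (3 ^ α * (4 * δ) : ℤ) ∣ 3 ^ n * (9 ^ m - 1) := by
    rw [Int.modEq_iff_dvd, ← mul_dvd_mul_iff_left (four_ne_zero' ℤ),
      four_mul_salajanU_add_two_mul_sub]
    push_cast
    rw [mul_left_comm]
  rw [Int.modEq_comm, Int.modEq_iff_dvd]
  constructor
  · rintro ⟨n0, h⟩
    have := (hmod (n0 + α)).mp (h _ (by omega))
    rw [pow_add, mul_comm (3 ^ n0), mul_assoc, mul_dvd_mul_iff_left (by positivity)] at this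
    exact (hcop n0).dvd_of_dvd_mul_left this
  · intro h
    exact ⟨α, fun n hn => (hmod n).mpr (mul_dvd_mul (pow_dvd_pow 3 hn) h)⟩

lemma nine_pow_modEq_one_iff_orderOf_dvd (n m : ℕ) :
    9 ^ m ≡ 1 [ZMOD n] ↔ orderOf (9 : ZMod n) ∣ m := by
  rw [orderOf_dvd_iff_pow_eq_one, ← ZMod.intCast_eq_intCast_iff]
  norm_cast

theorem isSalajanPeriod_iff {α δ : ℕ} (hd : 1 < 3 ^ α * δ) (hδ : ¬ 3 ∣ δ) (k : ℕ) :
    IsSalajanPeriod (3 ^ α * δ) k ↔ 2 * orderOf (9 : ZMod (4 * δ)) ∣ k := by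
  obtain ⟨m, rfl | rfl⟩ := k.even_or_odd'
  · rw [isSalajanPeriod_two_mul_iff hδ, Nat.mul_dvd_mul_iff_left two_pos,
      ← nine_pow_modEq_one_iff_orderOf_dvd]
    norm_cast
  · exact iff_of_false (not_isSalajanPeriod_of_odd hd (odd_two_mul_add_one m))
      fun h => (odd_two_mul_add_one m).not_two_dvd_nat ((dvd_mul_right 2 _).trans h)

lemma Nat.sInf_setOf_pos_dvd (n : ℕ) : sInf {k | 0 < k ∧ n ∣ k} = n := by
  rcases n.eq_zero_or_pos with rfl | hn
  · exact Nat.sInf_eq_zero.mpr <| Or.inr <|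
      Set.eq_empty_of_forall_notMem fun k ⟨hk, h0⟩ => hk.ne' (zero_dvd_iff.mp h0)
  · obtain ⟨hk, hnk⟩ := Nat.sInf_mem (s := {k | 0 < k ∧ n ∣ k}) ⟨n, hn, dvd_rfl⟩
    exact le_antisymm (Nat.sInf_le ⟨hn, dvd_rfl⟩) (Nat.le_of_dvd hk hnk)

theorem salajanRho_eq {d α δ : ℕ} (hd : 1 < d) (hδ : ¬ 3 ∣ δ) (hfact : d = 3 ^ α * δ) :
    salajanRho d = 2 * orderOf (9 : ZMod (4 * δ)) := by
  subst hfact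
  simp_rw [salajanRho_eq_sInf, isSalajanPeriod_iff hd hδ]
  exact Nat.sInf_setOf_pos_dvd _

lemma salajanRho_dvd_of_isSalajanPeriod {d k : ℕ} (hd : 1 < d) (hk : IsSalajanPeriod d k) :
    salajanRho d ∣ k := by
  obtain ⟨α, δ, hδ, rfl⟩ := Nat.exists_eq_pow_mul_and_not_dvd (by omega : d ≠ 0) 3 (by norm_num)
  rw [salajanRho_eq hd hδ rfl]
  exact (isSalajanPeriod_iff hd hδ k).mp hk

lemma isSalajanPeriod_totient {d : ℕ} (hd : Odd d) (hd1 : 1 < d) : IsSalajanPeriod d (φ d) := by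
  obtain ⟨α, δ, hδ, rfl⟩ := Nat.exists_eq_pow_mul_and_not_dvd (by omega : d ≠ 0) 3 (by norm_num)
  obtain ⟨m, hm⟩ := (Nat.totient_even (by grind : 2 < 3 ^ α * δ)).two_dvd
  rw [hm, isSalajanPeriod_two_mul_iff hδ]
  have h4 : 9 ^ m ≡ 1 [MOD 4] := by simpa using (show 9 ≡ 1 [MOD 4] by decide).pow m
  have hδ3 : 9 ^ m ≡ 1 [MOD δ] := by
    obtain ⟨j, hj⟩ := Nat.totient_dvd_of_dvd (dvd_mul_left δ (3 ^ α))
    have := (Nat.ModEq.pow_totient ((Nat.Prime.coprime_iff_not_dvd Nat.prime_three).mpr hδ)).pow j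
    rwa [one_pow, ← pow_mul, ← hj, hm, pow_mul] at this
  have hcop : Nat.Coprime (2 ^ 2) δ :=
    (Nat.coprime_two_left.mpr (Nat.odd_mul.mp hd).2).pow_left 2
  exact_mod_cast (Nat.modEq_and_modEq_iff_modEq_mul hcop).mp ⟨h4, hδ3⟩

lemma salajanRho_dvd_totient {d : ℕ} (hd : Odd d) (hd1 : 1 < d) : salajanRho d ∣ φ d :=
  salajanRho_dvd_of_isSalajanPeriod hd1 (isSalajanPeriod_totient hd hd1)

lemma ZMod.orderOf_nine_two_pow (n : ℕ) : orderOf (9 : ZMod (2 ^ (n + 3))) = 2 ^ n := by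
  have h := ZMod.orderOf_one_add_mul_prime_pow Nat.prime_two 3 (by norm_num) (by norm_num) 1
    (by norm_num) n
  norm_num at h
  exact h

theorem salajan_period_properties_general (d : ℕ) (hd : 1 < d) (α δ : ℕ)
    (hδ : ¬ 3 ∣ δ) (hfact : d = 3 ^ α * δ) :
    (salajanRho d = 2 * orderOf (9 : ZMod (4 * δ)) ∧ Even (salajanRho d)) ∧
    (∀ e : ℕ, 1 ≤ e → salajanRho (2 ^ e) = 2 ^ e) ∧
    salajanRho 3 = 2 ∧
    (∀ p e : ℕ, p.Prime → Odd p → 1 ≤ e → salajanRho (p ^ e) ∣ Nat.totient (p ^ e)) := by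
  have hρ := salajanRho_eq hd hδ hfact
  refine ⟨⟨hρ, hρ ▸ even_two_mul _⟩, fun e he => ?_, ?_, fun p e hp hpo he => ?_⟩
  · obtain ⟨n, rfl⟩ := Nat.exists_eq_add_of_le' he
    have h3 : ¬ 3 ∣ 2 ^ (n + 1) := fun h => by
      have := Nat.prime_three.dvd_of_dvd_pow h
      omega
    rw [salajanRho_eq (α := 0) (Nat.one_lt_two_pow (by omega)) h3 (by ring),
      show 4 * 2 ^ (n + 1) = 2 ^ (n + 3) by ring, ZMod.orderOf_nine_two_pow, pow_succ']
  · rw [salajanRho_eq (d := 3) (α := 1) (δ := 1) (by norm_num) (by norm_num) rfl,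
      show (9 : ZMod (4 * 1)) = 1 from rfl, orderOf_one]
  · exact salajanRho_dvd_totient hpo.pow (Nat.one_lt_pow (by omega) hp.one_lt)

theorem salajan_period_properties (d : ℕ) (hd : 1 < d) (h9 : ¬ 9 ∣ d) (α δ : ℕ)
    (hδ : ¬ 3 ∣ δ) (hfact : d = 3 ^ α * δ) :
    (salajanRho d = 2 * orderOf (9 : ZMod (4 * δ)) ∧ Even (salajanRho d)) ∧
    (∀ e : ℕ, 1 ≤ e → salajanRho (2 ^ e) = 2 ^ e) ∧
    salajanRho 3 = 2 ∧
    (∀ p e : ℕ, p.Prime → Odd p → 1 ≤ e → salajanRho (p ^ e) ∣ Nat.totient (p ^ e)) :=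
  salajan_period_properties_general d hd α δ hδ hfact
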